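/- For every n ≥ 3, the subgroup V_n^* of VP_n, defined as the normal closure of the set {λ_{in}, λ_{ni} : 1 ≤ i ≤ n−1}, is equal to the kernel of the deletion homomorphism d_n : VP_n → VP_{n−1} (the homomorphism determined by λ_{ij} ↦ λ_{ij} for distinct i, j ≤ n−1 and λ_{in}, λ_{ni} ↦ 1). -/

import Mathlib

/-- Generators of the pure virtual braid group `VP n`: ordered pairs of distinct
indices, the pair `(i, j)` corresponding to the generator `λ_{ij}`. -/
def Gen (n : ℕ) : Type := {p : Fin n × Fin n // p.1 ≠ p.2}

instance (n : ℕ) : DecidableEq (Gen n) :=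
  fun a b => decidable_of_iff (a.1 = b.1) Subtype.ext_iff.symm

/-- The generator `λ_{ij}` inside the free group on the generators. -/
def lamF {n : ℕ} {i j : Fin n} (h : i ≠ j) : FreeGroup (Gen n) :=
  FreeGroup.of ⟨(i, j), h⟩

/-- `s(ab) = 1` if `a < b`, and `-1` otherwise. -/
def sgn {n : ℕ} (a b : Fin n) : ℤ := if a < b then 1 else -1

/-- The defining relators of the pure virtual braid group `VP n`:
(1) `λ_{jk} λ_{im} = λ_{im} λ_{jk}` for pairwise distinct `i, j, k, m`;
(2) `λ_{ki}^{s(ki)} λ_{kj}^{s(kj)} λ_{ij}^{s(ij)} = λ_{ij}^{s(ij)} λ_{kj}^{s(kj)} λ_{ki}^{s(ki)}`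
for pairwise distinct `i, j, k`. -/
def vpRels (n : ℕ) : Set (FreeGroup (Gen n)) :=
  {r | ∃ (i j k m : Fin n) (hjk : j ≠ k) (him : i ≠ m),
      i ≠ j ∧ i ≠ k ∧ j ≠ m ∧ k ≠ m ∧
      r = lamF hjk * lamF him * (lamF hjk)⁻¹ * (lamF him)⁻¹} ∪
  {r | ∃ (i j k : Fin n) (hki : k ≠ i) (hkj : k ≠ j) (hij : i ≠ j),
      r = (lamF hki ^ sgn k i * lamF hkj ^ sgn k j * lamF hij ^ sgn i j) *
          (lamF hij ^ sgn i j * lamF hkj ^ sgn k j * lamF hki ^ sgn k i)⁻¹}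

/-- The pure virtual braid group on `n` strands, as a presented group. -/
abbrev VP (n : ℕ) : Type := PresentedGroup (vpRels n)

/-- The generator `λ_{ij}` of `VP n`. -/
def lam {n : ℕ} {i j : Fin n} (h : i ≠ j) : VP n := PresentedGroup.of ⟨(i, j), h⟩

/-- The order-preserving inclusion of indices `{1,…,n−1} ⊆ {1,…,n}`. -/
def emb (n : ℕ) : Fin (n - 1) → Fin n := Fin.castLE (Nat.sub_le n 1)

/-- The last index `n` (in one-based numbering) of `Fin n`. -/
def lastIdx (n : ℕ) (hn : 0 < n) : Fin n := ⟨n - 1, by omega⟩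

/-- The set `{λ_{in}, λ_{ni} : 1 ≤ i ≤ n−1}` whose normal closure is `V_n^*`. -/
def VstarSet (n : ℕ) (hn : 0 < n) : Set (VP n) :=
  {x | ∃ (i : Fin n) (hi : i ≠ lastIdx n hn), x = lam hi ∨ x = lam hi.symm}

/-!
The strictly monotone inclusion of indices `{1,…,n−1} ⊆ {1,…,n}` preserves both families of
defining relations (the signs `s(ab)` only see the order), so it induces `u : VP (n-1) →* VP n`.
Modulo `V_n^*` every generator `λ_{ij}` agrees with `u (d λ_{ij})`: both are trivial when
`n ∈ {i, j}`, and they are equal otherwise. Hence the projection `VP n → VP n ⧸ V_n^*` factors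
through `d`, so the kernel of `d` lies in `V_n^*`.
-/

theorem Subgroup.normalClosure_eq_ker_of_comp_eq {G H : Type*} [Group G] [Group H] {S : Set G}
    (d : G →* H) (u : H →* G) (hS : ∀ s ∈ S, d s = 1)
    (hu : ((QuotientGroup.mk' (normalClosure S)).comp u).comp d =
      QuotientGroup.mk' (normalClosure S)) :
    normalClosure S = d.ker := by
  refine le_antisymm (normalClosure_le_normal hS) fun x hx => ?_
  rw [← QuotientGroup.eq_one_iff, ← QuotientGroup.mk'_apply, ← hu]
  simp [(MonoidHom.mem_ker).mp hx]

namespace VP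

variable {m n : ℕ}

def genMap (f : Fin m ↪o Fin n) (g : Gen m) : Gen n :=
  ⟨(f g.1.1, f g.1.2), f.injective.ne g.2⟩

lemma sgn_map (f : Fin m ↪o Fin n) (a b : Fin m) : sgn (f a) (f b) = sgn a b := by
  simp only [sgn, f.lt_iff_lt]

lemma map_lamF (f : Fin m ↪o Fin n) {i j : Fin m} (h : i ≠ j) :
    FreeGroup.map (genMap f) (lamF h) = lamF (f.injective.ne h) :=
  FreeGroup.map.of

lemma map_mem_vpRels (f : Fin m ↪o Fin n) {r : FreeGroup (Gen m)} (hr : r ∈ vpRels m) :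
    FreeGroup.map (genMap f) r ∈ vpRels n := by
  obtain ⟨i, j, k, l, hjk, hil, hij, hik, hjl, hkl, rfl⟩ | ⟨i, j, k, hki, hkj, hij, rfl⟩ := hr
  · refine Or.inl ⟨f i, f j, f k, f l, f.injective.ne hjk, f.injective.ne hil, f.injective.ne hij,
      f.injective.ne hik, f.injective.ne hjl, f.injective.ne hkl, ?_⟩
    simp only [map_mul, map_inv, map_lamF]
  · refine Or.inr ⟨f i, f j, f k, f.injective.ne hki, f.injective.ne hkj, f.injective.ne hij, ?_⟩
    simp only [map_mul, map_inv, map_zpow, map_lamF, sgn_map]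

lemma lift_of_genMap_eq_one (f : Fin m ↪o Fin n) :
    ∀ r ∈ vpRels m, FreeGroup.lift (PresentedGroup.of (rels := vpRels n) ∘ genMap f) r = 1 := by
  intro r hr
  have hlift : FreeGroup.lift (PresentedGroup.of (rels := vpRels n) ∘ genMap f) =
      (PresentedGroup.mk (vpRels n)).comp (FreeGroup.map (genMap f)) :=
    FreeGroup.ext_hom _ _ fun _ => rfl
  rw [hlift, MonoidHom.comp_apply]
  exact PresentedGroup.one_of_mem (map_mem_vpRels f hr)

def mapOrderEmb (f : Fin m ↪o Fin n) : VP m →* VP n :=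
  PresentedGroup.toGroup (lift_of_genMap_eq_one f)

lemma mapOrderEmb_lam (f : Fin m ↪o Fin n) {i j : Fin m} (h : i ≠ j) :
    mapOrderEmb f (lam h) = lam (f.injective.ne h) :=
  PresentedGroup.toGroup.of _

end VP

lemma exists_emb_eq_of_ne_lastIdx {n : ℕ} (hn : 0 < n) {i : Fin n} (hi : i ≠ lastIdx n hn) :
    ∃ a, emb n a = i :=
  ⟨⟨i, by have := Fin.val_ne_of_ne hi; simp only [lastIdx] at this; omega⟩, rfl⟩

/-- For `n ≥ 3`, the subgroup `V_n^*`, the normal closure of `{λ_{in}, λ_{ni} : 1 ≤ i ≤ n−1}`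
in `VP n`, equals the kernel of the deletion homomorphism `d_n : VP n →* VP (n-1)`
(the homomorphism determined by `λ_{ij} ↦ λ_{ij}` for distinct `i, j ≤ n−1` and
`λ_{in}, λ_{ni} ↦ 1`). -/
theorem stmt_2 (n : ℕ) (hn : 3 ≤ n) (d : VP n →* VP (n - 1))
    (hd1 : ∀ (a b : Fin (n - 1)) (hab : a ≠ b) (hab' : emb n a ≠ emb n b),
      d (lam hab') = lam hab)
    (hd2 : ∀ (i : Fin n) (hi : i ≠ lastIdx n (by omega)),
      d (lam hi) = 1 ∧ d (lam hi.symm) = 1) :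
    Subgroup.normalClosure (VstarSet n (by omega)) = d.ker := by
  have hd_vstar : ∀ x ∈ VstarSet n (by omega), d x = 1 := by
    rintro x ⟨i, hi, rfl | rfl⟩
    exacts [(hd2 i hi).1, (hd2 i hi).2]
  refine Subgroup.normalClosure_eq_ker_of_comp_eq d
    (VP.mapOrderEmb (Fin.castLEOrderEmb (Nat.sub_le n 1))) hd_vstar ?_
  refine PresentedGroup.ext fun ⟨⟨i, j⟩, hij⟩ => ?_
  show QuotientGroup.mk' _ (VP.mapOrderEmb _ (d (lam hij))) = QuotientGroup.mk' _ (lam hij)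
  by_cases hv : lam hij ∈ VstarSet n (by omega)
  · rw [hd_vstar _ hv, map_one, map_one, eq_comm, QuotientGroup.mk'_apply,
      QuotientGroup.eq_one_iff]
    exact Subgroup.subset_normalClosure hv
  have hi : i ≠ lastIdx n (by omega) := by rintro rfl; exact hv ⟨j, hij.symm, Or.inr rfl⟩
  have hj : j ≠ lastIdx n (by omega) := by rintro rfl; exact hv ⟨i, hij, Or.inl rfl⟩
  obtain ⟨a, rfl⟩ := exists_emb_eq_of_ne_lastIdx _ hi
  obtain ⟨b, rfl⟩ := exists_emb_eq_of_ne_lastIdx _ hj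
  rw [hd1 a b (fun hab => hij (hab ▸ rfl)) hij, VP.mapOrderEmb_lam]
  rfl
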